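/- Let V=(d,Q,Δ) be a VASS and s(v) a configuration in Q×ℕ^d. Then s(v)⇝*t(0^d) in V (monus semantics) if and only if t(0^d)→*s(v') in rev(V) (classical semantics) for some v'≥v componentwise. -/

import Mathlib

/-- A transition of a `d`-dimensional VASS over state set `Q`:
a source state, an update vector in `ℤ^d`, and a target state. -/
abbrev VTrans (d : ℕ) (Q : Type*) := Q × (Fin d → ℤ) × Q

/-- A vector addition system with states (VASS), given by its set of transitions. -/
structure VASS (d : ℕ) (Q : Type*) where
  Δ : Set (VTrans d Q)

variable {d : ℕ} {Q : Type*}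

/-- A sequence of transitions is a path if consecutive states match. -/
def IsPath (ρ : List (VTrans d Q)) : Prop := ρ.Chain' (fun t t' => t.2.2 = t'.1)

/-- A path of the VASS `V`. -/
def PathIn (V : VASS d Q) (ρ : List (VTrans d Q)) : Prop :=
  IsPath ρ ∧ ∀ t ∈ ρ, t ∈ V.Δ

/-- The path starts at state `s` (any state works for the empty path). -/
def FromState (s : Q) (ρ : List (VTrans d Q)) : Prop :=
  match ρ with
  | [] => True
  | t :: _ => t.1 = s

/-- The last state of the run induced by `ρ` from state `s`. -/
def endState (s : Q) (ρ : List (VTrans d Q)) : Q := (ρ.map (fun t => t.2.2)).getLastD s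

/-- Cast a vector over `ℕ` to a vector over `ℤ`. -/
def ofNatVec (v : Fin d → ℕ) : Fin d → ℤ := fun j => (v j : ℤ)

/-- The `i`-th vector of the ℤ-run induced by the path `ρ` from initial vector `v`. -/
def zrun (v : Fin d → ℤ) (ρ : List (VTrans d Q)) (i : ℕ) : Fin d → ℤ :=
  v + ((ρ.take i).map (fun t => t.2.1)).sum

/-- The last vector of the ℤ-run induced by `ρ` from `v`. -/
def zend (v : Fin d → ℤ) (ρ : List (VTrans d Q)) : Fin d → ℤ := zrun v ρ ρ.length

/-- One step of the monus semantics: add `z` and truncate at `0` componentwise. -/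
def mstep (v : Fin d → ℕ) (z : Fin d → ℤ) : Fin d → ℕ := fun j => ((v j : ℤ) + z j).toNat

/-- The `i`-th vector of the monus run induced by the path `ρ` from initial vector `v`. -/
def mrun (v : Fin d → ℕ) (ρ : List (VTrans d Q)) (i : ℕ) : Fin d → ℕ :=
  (ρ.take i).foldl (fun u t => mstep u t.2.1) v

/-- The last vector of the monus run induced by `ρ` from `v`. -/
def mend (v : Fin d → ℕ) (ρ : List (VTrans d Q)) : Fin d → ℕ := mrun v ρ ρ.length

/-- The classical run induced by `ρ` from `v` exists: no value of the ℤ-run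
drops below zero in any coordinate. -/
def ClassicalOK (v : Fin d → ℕ) (ρ : List (VTrans d Q)) : Prop :=
  ∀ i ≤ ρ.length, ∀ j, 0 ≤ zrun (ofNatVec v) ρ i j

/-- Classical reachability `s(v) →* t(w)`. -/
def ClassicalReach (V : VASS d Q) (s : Q) (v : Fin d → ℕ) (t : Q) (w : Fin d → ℕ) : Prop :=
  ∃ ρ, PathIn V ρ ∧ FromState s ρ ∧ endState s ρ = t ∧ ClassicalOK v ρ ∧
    zend (ofNatVec v) ρ = ofNatVec w

/-- Reachability in ℤ-semantics `s(v) →ℤ* t(w)`. -/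
def ZReach (V : VASS d Q) (s : Q) (v : Fin d → ℤ) (t : Q) (w : Fin d → ℤ) : Prop :=
  ∃ ρ, PathIn V ρ ∧ FromState s ρ ∧ endState s ρ = t ∧ zend v ρ = w

/-- Reachability in monus semantics `s(v) ⇝* t(w)`. -/
def MonusReach (V : VASS d Q) (s : Q) (v : Fin d → ℕ) (t : Q) (w : Fin d → ℕ) : Prop :=
  ∃ ρ, PathIn V ρ ∧ FromState s ρ ∧ endState s ρ = t ∧ mend v ρ = w

/-- Coordinate `j` hits `0` in the ℤ-run (equivalently, classical run) induced
by `ρ` from `v` (at some index `1 ≤ i ≤ k`). -/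
def HitsZeroZ (v : Fin d → ℤ) (ρ : List (VTrans d Q)) (j : Fin d) : Prop :=
  ∃ i, 1 ≤ i ∧ i ≤ ρ.length ∧ zrun v ρ i j = 0

/-- Coordinate `j` hits `0` in the monus run induced by `ρ` from `v`. -/
def HitsZeroM (v : Fin d → ℕ) (ρ : List (VTrans d Q)) (j : Fin d) : Prop :=
  ∃ i, 1 ≤ i ∧ i ≤ ρ.length ∧ mrun v ρ i j = 0

/-- The monus run induced by `ρ` from `v` is lossy: at some step, for some
coordinate, the actual change differs from the transition's update. -/
def Lossy (v : Fin d → ℕ) (ρ : List (VTrans d Q)) : Prop :=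
  ∃ (i : Fin ρ.length) (j : Fin d),
    (mrun v ρ ((i : ℕ) + 1) j : ℤ) ≠ (mrun v ρ (i : ℕ) j : ℤ) + (ρ.get i).2.1 j

/-- `mi ρ s₀ v₀`: the coordinatewise minimum (with `0`) of all values along
the ℤ-run induced by `ρ` from `v`. -/
def mi (v : Fin d → ℤ) (ρ : List (VTrans d Q)) : Fin d → ℤ :=
  fun j => min 0 ((Finset.range (ρ.length + 1)).inf' Finset.nonempty_range_add_one
    (fun i => zrun v ρ i j))

/-- The reverse VASS: `(p,z,q)` is a transition iff `(q,-z,p)` is one of `V`. -/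
def revV (V : VASS d Q) : VASS d Q := ⟨{tr | (tr.2.2, -tr.2.1, tr.1) ∈ V.Δ}⟩

/-- Coverability in monus semantics. -/
def MonusCover (V : VASS d Q) (s : Q) (v : Fin d → ℕ) (t : Q) (w : Fin d → ℕ) : Prop :=
  ∃ w', w ≤ w' ∧ MonusReach V s v t w'

/-- Coverability in classical semantics. -/
def ClassicalCover (V : VASS d Q) (s : Q) (v : Fin d → ℕ) (t : Q) (w : Fin d → ℕ) : Prop :=
  ∃ w', w ≤ w' ∧ ClassicalReach V s v t w'

/-! A monus run never drops below the ℤ-run of the same path, so a monus run from `v` to `0`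
along `ρ` is dominated by the classical run along `ρ` from `v' := -(effect of ρ) ≥ v`, which
ends in `0`. Conversely a classical run from `v' ≥ v` to `0` is also a monus run, and monus runs
are monotone in their start. Finally, classical runs of `V` are exactly the reversed classical
runs of `rev(V)`. -/

def effect (ρ : List (VTrans d Q)) : Fin d → ℤ := (ρ.map fun t => t.2.1).sum

def flipTrans (t : VTrans d Q) : VTrans d Q := (t.2.2, -t.2.1, t.1)

def revPath (ρ : List (VTrans d Q)) : List (VTrans d Q) := (ρ.map flipTrans).reverse

lemma ofNatVec_injective : Function.Injective (ofNatVec (d := d)) :=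
  fun _ _ h => funext fun j => Int.ofNat_inj.mp (congrFun h j)

lemma ofNatVec_nonneg (v : Fin d → ℕ) : 0 ≤ ofNatVec v := fun j => Int.natCast_nonneg (v j)

@[simp] lemma ofNatVec_zero : ofNatVec (0 : Fin d → ℕ) = 0 := funext fun _ => rfl

lemma effect_append (ρ σ : List (VTrans d Q)) : effect (ρ ++ σ) = effect ρ + effect σ := by
  simp [effect]

lemma effect_take_add_effect_drop (ρ : List (VTrans d Q)) (m : ℕ) :
    effect (ρ.take m) + effect (ρ.drop m) = effect ρ := by
  rw [← effect_append, List.take_append_drop]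

lemma effect_revPath (ρ : List (VTrans d Q)) : effect (revPath ρ) = -effect ρ := by
  induction ρ with
  | nil => simp [effect, revPath]
  | cons t ρ ih =>
    simp only [revPath, List.map_cons, List.reverse_cons] at ih ⊢
    rw [effect_append, ih]
    simp [effect, flipTrans, add_comm]

lemma zrun_eq (v : Fin d → ℤ) (ρ : List (VTrans d Q)) (i : ℕ) :
    zrun v ρ i = v + effect (ρ.take i) := by
  simp [zrun, effect]

lemma zend_eq (v : Fin d → ℤ) (ρ : List (VTrans d Q)) : zend v ρ = v + effect ρ := by
  simp [zend, zrun_eq]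

lemma zrun_succ (v : Fin d → ℤ) (ρ : List (VTrans d Q)) {i : ℕ} (hi : i < ρ.length) :
    zrun v ρ (i + 1) = zrun v ρ i + ρ[i].2.1 := by
  rw [zrun_eq, zrun_eq, List.take_add_one, List.getElem?_eq_getElem hi, effect_append, add_assoc]
  simp [effect]

lemma length_revPath (ρ : List (VTrans d Q)) : (revPath ρ).length = ρ.length := by
  simp [revPath]

lemma take_revPath (ρ : List (VTrans d Q)) (i : ℕ) :
    (revPath ρ).take i = revPath (ρ.drop (ρ.length - i)) := by
  simp [revPath, List.take_reverse, List.map_drop]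

lemma zrun_revPath (v : Fin d → ℤ) (ρ : List (VTrans d Q)) (i : ℕ) :
    zrun (zend v ρ) (revPath ρ) i = zrun v ρ (ρ.length - i) := by
  rw [zrun_eq, zrun_eq, zend_eq, take_revPath, effect_revPath,
    ← effect_take_add_effect_drop ρ (ρ.length - i)]
  abel

lemma pathIn_revPath {V : VASS d Q} {ρ : List (VTrans d Q)} (h : PathIn V ρ) :
    PathIn (revV V) (revPath ρ) := by
  refine ⟨?_, fun u hu => ?_⟩
  · have hchain : List.IsChain (fun t t' : VTrans d Q => t.2.2 = t'.1) ρ := h.1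
    show List.IsChain _ (ρ.map flipTrans).reverse
    rw [List.isChain_reverse, List.isChain_map]
    exact hchain.imp fun _ _ hab => hab.symm
  · obtain ⟨t, ht, rfl⟩ := List.mem_map.mp (List.mem_reverse.mp hu)
    simpa [revV, flipTrans] using h.2 t ht

lemma fromState_revPath {s : Q} (ρ : List (VTrans d Q)) :
    FromState (endState s ρ) (revPath ρ) := by
  rcases ρ.eq_nil_or_concat with rfl | ⟨σ, t, rfl⟩
  · trivial
  · simp [FromState, revPath, endState, flipTrans]

lemma endState_revPath {s : Q} {ρ : List (VTrans d Q)} (h : FromState s ρ) :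
    endState (endState s ρ) (revPath ρ) = s := by
  cases ρ with
  | nil => rfl
  | cons t σ => simpa [endState, revPath, flipTrans, FromState] using h

lemma revV_revV (V : VASS d Q) : revV (revV V) = V := by
  simp [revV]

lemma ClassicalReach.revV {V : VASS d Q} {s t : Q} {v w : Fin d → ℕ}
    (h : ClassicalReach V s v t w) : ClassicalReach (revV V) t w s v := by
  obtain ⟨ρ, hρ, hfrom, rfl, hok, hend⟩ := h
  have hrun (i : ℕ) :
      zrun (ofNatVec w) (revPath ρ) i = zrun (ofNatVec v) ρ (ρ.length - i) := by
    rw [← hend, zrun_revPath]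
  refine ⟨revPath ρ, pathIn_revPath hρ, fromState_revPath ρ, endState_revPath hfrom,
    fun i _ => ?_, ?_⟩
  · rw [hrun]
    exact hok _ (Nat.sub_le _ _)
  · rw [zend, hrun, length_revPath, Nat.sub_self, zrun_eq]
    simp [effect]

lemma classicalReach_revV_iff {V : VASS d Q} {s t : Q} {v w : Fin d → ℕ} :
    ClassicalReach (revV V) t w s v ↔ ClassicalReach V s v t w :=
  ⟨fun h => revV_revV V ▸ h.revV, ClassicalReach.revV⟩

lemma mend_eq_foldl (v : Fin d → ℕ) (ρ : List (VTrans d Q)) :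
    mend v ρ = ρ.foldl (fun u t => mstep u t.2.1) v := by
  simp [mend, mrun]

lemma mrun_eq_mend_take (v : Fin d → ℕ) (ρ : List (VTrans d Q)) (i : ℕ) :
    mrun v ρ i = mend v (ρ.take i) := by
  rw [mend_eq_foldl, mrun]

lemma mend_cons (v : Fin d → ℕ) (t : VTrans d Q) (ρ : List (VTrans d Q)) :
    mend v (t :: ρ) = mend (mstep v t.2.1) ρ := by
  simp [mend_eq_foldl]

lemma mend_append (v : Fin d → ℕ) (ρ σ : List (VTrans d Q)) :
    mend v (ρ ++ σ) = mend (mend v ρ) σ := by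
  simp [mend_eq_foldl, List.foldl_append]

lemma mend_mrun_drop (v : Fin d → ℕ) (ρ : List (VTrans d Q)) (i : ℕ) :
    mend (mrun v ρ i) (ρ.drop i) = mend v ρ := by
  rw [mrun_eq_mend_take, ← mend_append, List.take_append_drop]

lemma mrun_succ (v : Fin d → ℕ) (ρ : List (VTrans d Q)) {i : ℕ} (hi : i < ρ.length) :
    mrun v ρ (i + 1) = mstep (mrun v ρ i) ρ[i].2.1 := by
  rw [mrun_eq_mend_take, mrun_eq_mend_take, List.take_add_one,
    List.getElem?_eq_getElem hi, mend_append]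
  rfl

lemma mstep_mono {u w : Fin d → ℕ} (h : u ≤ w) (z : Fin d → ℤ) :
    mstep u z ≤ mstep w z :=
  fun j => Int.toNat_le_toNat (by simpa using h j)

lemma mend_mono {u w : Fin d → ℕ} (h : u ≤ w) (ρ : List (VTrans d Q)) :
    mend u ρ ≤ mend w ρ := by
  induction ρ generalizing u w with
  | nil => exact h
  | cons t ρ ih => simpa only [mend_cons] using ih (mstep_mono h t.2.1)

lemma le_ofNatVec_mstep (u : Fin d → ℕ) (z : Fin d → ℤ) :
    ofNatVec u + z ≤ ofNatVec (mstep u z) :=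
  fun _ => Int.self_le_toNat _

lemma ofNatVec_mstep_of_nonneg {u : Fin d → ℕ} {z : Fin d → ℤ} (h : 0 ≤ ofNatVec u + z) :
    ofNatVec (mstep u z) = ofNatVec u + z :=
  funext fun j => Int.toNat_of_nonneg (h j)

lemma le_ofNatVec_mend (u : Fin d → ℕ) (ρ : List (VTrans d Q)) :
    ofNatVec u + effect ρ ≤ ofNatVec (mend u ρ) := by
  induction ρ generalizing u with
  | nil => simp [effect, mend_eq_foldl]
  | cons t ρ ih =>
    have hstep := add_le_add_left (le_ofNatVec_mstep u t.2.1) (effect ρ)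
    rw [mend_cons, show effect (t :: ρ) = t.2.1 + effect ρ by simp [effect], ← add_assoc]
    exact hstep.trans (ih _)

lemma ofNatVec_mrun_of_classicalOK {v : Fin d → ℕ} {ρ : List (VTrans d Q)}
    (hok : ClassicalOK v ρ) {i : ℕ} (hi : i ≤ ρ.length) :
    ofNatVec (mrun v ρ i) = zrun (ofNatVec v) ρ i := by
  induction i with
  | zero => simp [mrun, zrun_eq, effect]
  | succ i ih =>
    have hlt : i < ρ.length := hi
    have hnonneg := hok (i + 1) hi
    rw [zrun_succ _ _ hlt, ← ih hlt.le] at hnonneg ⊢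
    rw [mrun_succ _ _ hlt, ofNatVec_mstep_of_nonneg hnonneg]

lemma ClassicalReach.monusReach {V : VASS d Q} {s t : Q} {v w : Fin d → ℕ}
    (h : ClassicalReach V s v t w) : MonusReach V s v t w := by
  obtain ⟨ρ, hρ, hfrom, hto, hok, hend⟩ := h
  exact ⟨ρ, hρ, hfrom, hto,
    ofNatVec_injective ((ofNatVec_mrun_of_classicalOK hok le_rfl).trans hend)⟩

lemma MonusReach.zero_of_le {V : VASS d Q} {s t : Q} {v v' : Fin d → ℕ} (hle : v ≤ v')
    (h : MonusReach V s v' t 0) : MonusReach V s v t 0 := by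
  obtain ⟨ρ, hρ, hfrom, hto, hend⟩ := h
  exact ⟨ρ, hρ, hfrom, hto, le_antisymm (hend ▸ mend_mono hle ρ) (fun _ => Nat.zero_le _)⟩

/-- Along a monus run to `0`, the counters are bounded by minus the effect of the rest of the
path, which is the ℤ-run started in `-(effect ρ)`. -/
lemma MonusReach.exists_classicalReach_zero {V : VASS d Q} {s t : Q} {v : Fin d → ℕ}
    (h : MonusReach V s v t 0) : ∃ v', v ≤ v' ∧ ClassicalReach V s v' t 0 := by
  obtain ⟨ρ, hρ, hfrom, hto, hend⟩ := h
  have hbound (i : ℕ) : ofNatVec (mrun v ρ i) ≤ -effect (ρ.drop i) := by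
    have := le_ofNatVec_mend (mrun v ρ i) (ρ.drop i)
    rw [mend_mrun_drop, hend, ofNatVec_zero] at this
    exact le_neg_iff_add_nonpos_right.mpr this
  have hstart : ofNatVec v ≤ -effect ρ := by simpa [mrun] using hbound 0
  set v' : Fin d → ℕ := fun j => (-effect ρ j).toNat
  have hv' : ofNatVec v' = -effect ρ :=
    funext fun j => Int.toNat_of_nonneg ((ofNatVec_nonneg v j).trans (hstart j))
  have hrun (i : ℕ) : zrun (ofNatVec v') ρ i = -effect (ρ.drop i) := by
    rw [zrun_eq, hv', ← effect_take_add_effect_drop ρ i]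
    abel
  refine ⟨v', fun j => ?_, ρ, hρ, hfrom, hto, fun i _ => ?_, ?_⟩
  · exact Int.ofNat_le.mp ((hstart.trans hv'.ge) j)
  · exact hrun i ▸ (ofNatVec_nonneg _).trans (hbound i)
  · simp [zend, hrun, effect]

/-- (Characterization of monus zero reachability.)
`s(v) ⇝* t(0)` in `V` (monus semantics) iff `t(0) →* s(v')` in `rev(V)`
(classical semantics) for some `v' ≥ v`. -/
theorem stmt10 {d : ℕ} {Q : Type*} (V : VASS d Q) (s t : Q) (v : Fin d → ℕ) :
    MonusReach V s v t 0 ↔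
    ∃ v' : Fin d → ℕ, v ≤ v' ∧ ClassicalReach (revV V) t 0 s v' := by
  simp only [classicalReach_revV_iff]
  exact ⟨MonusReach.exists_classicalReach_zero,
    fun ⟨_, hle, h⟩ => h.monusReach.zero_of_le hle⟩
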